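/- Define f(T,n) = 2T·arsinh(√(πn/(2T))) + √(2πnT + π²n²) − π/4 for T > 0 and positive integers n. Then for 1 ≤ n ≤ T, f(T,n) = −π/4 + 2√(2πnT) + (1/6)√(2π³)·n^{3/2}·T^{-1/2} + O(n^{5/2} T^{-3/2}). -/

import Mathlib

open Real

lemma hasDerivAt_Fg (x : ℝ) :
    HasDerivAt (fun y : ℝ => Real.arsinh y + y * Real.sqrt (1 + y ^ 2))
      (2 * Real.sqrt (1 + x ^ 2)) x := by
  have hpos : (0:ℝ) < 1 + x ^ 2 := by positivity
  have hs : 0 < Real.sqrt (1 + x ^ 2) := Real.sqrt_pos.mpr hpos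
  have hsq : Real.sqrt (1 + x ^ 2) ^ 2 = 1 + x ^ 2 := Real.sq_sqrt hpos.le
  have h1 : HasDerivAt (fun y : ℝ => 1 + y ^ 2) (2 * x) x := by
    simpa using (hasDerivAt_pow 2 x).const_add 1
  have h2 : HasDerivAt (fun y : ℝ => Real.sqrt (1 + y ^ 2))
      (2 * x / (2 * Real.sqrt (1 + x ^ 2))) x := h1.sqrt hpos.ne'
  have h3 : HasDerivAt (fun y : ℝ => y * Real.sqrt (1 + y ^ 2))
      (1 * Real.sqrt (1 + x ^ 2) + x * (2 * x / (2 * Real.sqrt (1 + x ^ 2)))) x :=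
    (hasDerivAt_id x).mul h2
  have h4 : HasDerivAt (fun y : ℝ => Real.arsinh y + y * Real.sqrt (1 + y ^ 2)) _ x :=
    (Real.hasDerivAt_arsinh x).add h3
  convert h4 using 1
  field_simp
  nlinarith [hsq, hs]

lemma g_bound {x : ℝ} (hx0 : 0 ≤ x) (hx2 : x ≤ 2) :
    |Real.arsinh x + x * Real.sqrt (1 + x ^ 2) - (2 * x + x ^ 3 / 3)| ≤ x ^ 5 / 20 := by
  -- upper: monotone of G₁ = 2x + x³/3 - F
  have hG1 : MonotoneOn (fun y : ℝ => 2 * y + y ^ 3 / 3 -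
      (Real.arsinh y + y * Real.sqrt (1 + y ^ 2))) (Set.Icc 0 2) := by
    have hd : ∀ y : ℝ, HasDerivAt (fun y : ℝ => 2 * y + y ^ 3 / 3 -
        (Real.arsinh y + y * Real.sqrt (1 + y ^ 2)))
        (2 + 3 * y ^ 2 / 3 - 2 * Real.sqrt (1 + y ^ 2)) y := by
      intro y
      exact (((hasDerivAt_id y).const_mul 2).add ((hasDerivAt_pow 3 y).div_const 3)).sub
        (hasDerivAt_Fg y) |>.congr_deriv (by ring)
    apply monotoneOn_of_deriv_nonneg (convex_Icc 0 2)
    · exact Continuous.continuousOn (by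
        continuity)
    · intro y _; exact (hd y).differentiableAt.differentiableWithinAt
    · intro y _
      rw [(hd y).deriv]
      have hsq : Real.sqrt (1 + y ^ 2) ^ 2 = 1 + y ^ 2 := Real.sq_sqrt (by positivity)
      nlinarith [Real.sqrt_nonneg (1 + y ^ 2), sq_nonneg (y^2)]
  -- lower: monotone of G₂ = F - (2x + x³/3 - x⁵/20)
  have hG2 : MonotoneOn (fun y : ℝ => (Real.arsinh y + y * Real.sqrt (1 + y ^ 2)) -
      (2 * y + y ^ 3 / 3 - y ^ 5 / 20)) (Set.Icc 0 2) := by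
    have hd : ∀ y : ℝ, HasDerivAt (fun y : ℝ => (Real.arsinh y + y * Real.sqrt (1 + y ^ 2)) -
        (2 * y + y ^ 3 / 3 - y ^ 5 / 20))
        (2 * Real.sqrt (1 + y ^ 2) - (2 + y ^ 2 - y ^ 4 / 4)) y := by
      intro y
      exact (hasDerivAt_Fg y).sub ((((hasDerivAt_id y).const_mul 2).add
        ((hasDerivAt_pow 3 y).div_const 3)).sub ((hasDerivAt_pow 5 y).div_const 20))
        |>.congr_deriv (by push_cast; ring)
    apply monotoneOn_of_deriv_nonneg (convex_Icc 0 2)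
    · exact Continuous.continuousOn (by continuity)
    · intro y hy; exact (hd y).differentiableAt.differentiableWithinAt
    · intro y hy
      rw [(hd y).deriv]
      rw [interior_Icc] at hy
      obtain ⟨hy0, hy2⟩ := hy
      have hsq : Real.sqrt (1 + y ^ 2) ^ 2 = 1 + y ^ 2 := Real.sq_sqrt (by positivity)
      have hs0 : 0 ≤ Real.sqrt (1 + y ^ 2) := Real.sqrt_nonneg _
      have h4 : y ^ 2 ≤ 4 := by nlinarith
      have hR : 2 ≤ 2 + y ^ 2 - y ^ 4 / 4 := by nlinarith [mul_nonneg (sq_nonneg y) (by linarith : (0:ℝ) ≤ 4 - y ^ 2)]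
      have key : (0:ℝ) ≤ (2 * Real.sqrt (1 + y ^ 2)) ^ 2 - (2 + y ^ 2 - y ^ 4 / 4) ^ 2 := by
        have h6 : (0:ℝ) ≤ y ^ 6 * (8 - y ^ 2) := by
          apply mul_nonneg (by positivity); linarith
        nlinarith [hsq]
      nlinarith [key, hR, hs0]
  have hmem : x ∈ Set.Icc (0:ℝ) 2 := ⟨hx0, hx2⟩
  have h0 : (0:ℝ) ∈ Set.Icc (0:ℝ) 2 := by norm_num
  have hu := hG1 h0 hmem hx0
  have hl := hG2 h0 hmem hx0
  simp [Real.arsinh_zero] at hu hl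
  rw [abs_le]
  constructor <;> nlinarith


/-- The phase function in Atkinson's formula. -/
noncomputable def atkinsonF (T : ℝ) (n : ℕ) : ℝ :=
  2 * T * Real.arsinh (Real.sqrt (Real.pi * n / (2 * T))) +
    Real.sqrt (2 * Real.pi * n * T + Real.pi ^ 2 * n ^ 2) - Real.pi / 4

set_option maxHeartbeats 1000000 in
lemma atkinson_key : ∀ T : ℝ, 0 < T → ∀ n : ℕ, 1 ≤ n → (n : ℝ) ≤ T →
      |atkinsonF T n -
          (-(Real.pi / 4) + 2 * Real.sqrt (2 * Real.pi * n * T) +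
            (1 / 6) * Real.sqrt (2 * Real.pi ^ 3) * (n : ℝ) ^ ((3 : ℝ) / 2) *
              T ^ (-(1 : ℝ) / 2))| ≤
        1 * (n : ℝ) ^ ((5 : ℝ) / 2) * T ^ (-(3 : ℝ) / 2) := by
  intro T hT n hn1 hnT
  have hπ := Real.pi_pos
  have hn0 : (0:ℝ) < n := by exact_mod_cast hn1
  obtain ⟨a, ha⟩ : ∃ a : ℝ, a = Real.pi * n / (2 * T) := ⟨_, rfl⟩
  have ha0 : 0 < a := by rw [ha]; positivity
  obtain ⟨s, hs⟩ : ∃ s : ℝ, s = Real.sqrt a := ⟨_, rfl⟩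
  have hs0 : 0 ≤ s := hs ▸ Real.sqrt_nonneg _
  have hssq : s ^ 2 = a := hs ▸ Real.sq_sqrt ha0.le
  have hs2 : s ≤ 2 := by
    have ha4 : a ≤ 4 := by
      rw [ha, div_le_iff₀ (by positivity)]
      nlinarith [Real.pi_le_four]
    calc s ≤ Real.sqrt 4 := hs ▸ Real.sqrt_le_sqrt ha4
    _ = 2 := by rw [show (4:ℝ) = 2^2 by norm_num, Real.sqrt_sq (by norm_num)]
  have h1s : (0:ℝ) < 1 + s ^ 2 := by positivity
  have hsq1 : Real.sqrt (1 + s ^ 2) ^ 2 = 1 + s ^ 2 := Real.sq_sqrt h1s.le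
  -- identity 1
  have id1 : Real.sqrt (2 * Real.pi * n * T + Real.pi ^ 2 * n ^ 2)
      = 2 * T * (s * Real.sqrt (1 + s ^ 2)) := by
    rw [show 2 * Real.pi * (n:ℝ) * T + Real.pi ^ 2 * (n:ℝ) ^ 2
        = (2 * T * (s * Real.sqrt (1 + s ^ 2))) ^ 2 by
      have : (2 * T * (s * Real.sqrt (1 + s ^ 2))) ^ 2 = 4 * T ^ 2 * (s ^ 2 * (1 + s ^ 2)) := by
        rw [mul_pow, mul_pow, mul_pow, hsq1]; norm_num
      rw [this, hssq, ha]; field_simp; ring]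
    exact Real.sqrt_sq (by positivity)
  -- identity 2
  have id2 : Real.sqrt (2 * Real.pi * n * T) = 2 * T * s := by
    rw [show 2 * Real.pi * (n:ℝ) * T = (2 * T * s) ^ 2 by
      rw [mul_pow, mul_pow, hssq, ha]; field_simp]
    exact Real.sqrt_sq (by positivity)
  -- identity 3
  have id3 : (1 / 6) * Real.sqrt (2 * Real.pi ^ 3) * (n : ℝ) ^ ((3 : ℝ) / 2) *
      T ^ (-(1 : ℝ) / 2) = (2 / 3) * T * s ^ 3 := by
    have hL0 : 0 ≤ (1 / 6) * Real.sqrt (2 * Real.pi ^ 3) * (n : ℝ) ^ ((3 : ℝ) / 2) *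
        T ^ (-(1 : ℝ) / 2) := by positivity
    have hR0 : 0 ≤ (2 / 3) * T * s ^ 3 := by positivity
    have hsqeq : ((1 / 6) * Real.sqrt (2 * Real.pi ^ 3) * (n : ℝ) ^ ((3 : ℝ) / 2) *
        T ^ (-(1 : ℝ) / 2)) ^ 2 = ((2 / 3) * T * s ^ 3) ^ 2 := by
      have e1 : ((n : ℝ) ^ ((3 : ℝ) / 2)) ^ 2 = (n : ℝ) ^ 3 := by
        rw [← Real.rpow_natCast ((n:ℝ) ^ ((3:ℝ)/2)) 2, ← Real.rpow_mul hn0.le]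
        norm_num
      have e2 : (T ^ (-(1 : ℝ) / 2)) ^ 2 = T⁻¹ := by
        rw [← Real.rpow_natCast (T ^ (-(1:ℝ)/2)) 2, ← Real.rpow_mul hT.le]
        norm_num
        exact Real.rpow_neg_one T
      have e3 : Real.sqrt (2 * Real.pi ^ 3) ^ 2 = 2 * Real.pi ^ 3 :=
        Real.sq_sqrt (by positivity)
      have e4 : (s ^ 3) ^ 2 = a ^ 3 := by rw [← pow_mul, show 3*2 = 2*3 by ring, pow_mul, hssq]
      rw [mul_pow, mul_pow, mul_pow, mul_pow, mul_pow, e1, e2, e3, e4, ha]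
      field_simp; ring
    nlinarith [hL0, hR0, hsqeq]
  have hdiff : atkinsonF T n -
      (-(Real.pi / 4) + 2 * Real.sqrt (2 * Real.pi * n * T) +
        (1 / 6) * Real.sqrt (2 * Real.pi ^ 3) * (n : ℝ) ^ ((3 : ℝ) / 2) *
          T ^ (-(1 : ℝ) / 2))
      = 2 * T * (Real.arsinh s + s * Real.sqrt (1 + s ^ 2) - (2 * s + s ^ 3 / 3)) := by
    rw [atkinsonF, ← ha, ← hs, id1, id2, id3]; ring
  rw [hdiff, abs_mul, abs_of_pos (by positivity : (0:ℝ) < 2 * T)]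
  have hg : |Real.arsinh s + s * Real.sqrt (1 + s ^ 2) - (2 * s + s ^ 3 / 3)| ≤ s ^ 5 / 20 :=
    g_bound hs0 hs2
  have step1 : 2 * T * |Real.arsinh s + s * Real.sqrt (1 + s ^ 2) - (2 * s + s ^ 3 / 3)|
      ≤ T * s ^ 5 / 10 := by nlinarith [hg, hT]
  refine step1.trans ?_
  -- T * s^5 / 10 ≤ 1 * n^(5/2) * T^(-3/2)
  have hL0 : 0 ≤ T * s ^ 5 / 10 := by positivity
  have hR0 : 0 ≤ 1 * (n:ℝ) ^ ((5:ℝ)/2) * T ^ (-(3:ℝ)/2) := by positivity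
  have e1 : ((n : ℝ) ^ ((5 : ℝ) / 2)) ^ 2 = (n : ℝ) ^ 5 := by
    rw [← Real.rpow_natCast ((n:ℝ) ^ ((5:ℝ)/2)) 2, ← Real.rpow_mul hn0.le]
    norm_num
  have e2 : (T ^ (-(3 : ℝ) / 2)) ^ 2 = (T ^ 3)⁻¹ := by
    rw [← Real.rpow_natCast (T ^ (-(3:ℝ)/2)) 2, ← Real.rpow_mul hT.le]
    norm_num
  have e4 : (s ^ 5) ^ 2 = a ^ 5 := by rw [← pow_mul, show 5*2 = 2*5 by ring, pow_mul, hssq]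
  have hπn : (n:ℝ) ≤ T := hnT
  have hsqle : (T * s ^ 5 / 10) ^ 2 ≤ (1 * (n:ℝ) ^ ((5:ℝ)/2) * T ^ (-(3:ℝ)/2)) ^ 2 := by
    rw [mul_pow, mul_pow, e1, e2, div_pow, mul_pow, e4, ha]
    have hπ4 : Real.pi ^ 5 ≤ 1024 := by
      calc Real.pi ^ 5 ≤ 4 ^ 5 := pow_le_pow_left₀ hπ.le Real.pi_le_four 5
      _ = 1024 := by norm_num
    have hT3 : (0:ℝ) < T ^ 3 := by positivity
    have heq : T ^ 2 * (Real.pi * (n:ℝ) / (2 * T)) ^ 5 / 10 ^ 2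
        = Real.pi ^ 5 * (n:ℝ) ^ 5 / (3200 * T ^ 3) := by
      rw [div_pow, mul_pow]
      rw [show ((2:ℝ) * T) ^ 5 = 32 * T ^ 5 by ring]
      field_simp
      ring
    rw [heq, one_pow, one_mul, ← div_eq_mul_inv,
      div_le_div_iff₀ (by positivity) (by positivity)]
    nlinarith [mul_le_mul_of_nonneg_right hπ4
      (mul_nonneg (pow_nonneg hn0.le 5) (pow_nonneg hT.le 3))]
  nlinarith [hL0, hR0, hsqle]

theorem atkinsonF_asymptotic :
    ∃ C > 0, ∀ T : ℝ, 0 < T → ∀ n : ℕ, 1 ≤ n → (n : ℝ) ≤ T →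
      |atkinsonF T n -
          (-(Real.pi / 4) + 2 * Real.sqrt (2 * Real.pi * n * T) +
            (1 / 6) * Real.sqrt (2 * Real.pi ^ 3) * (n : ℝ) ^ ((3 : ℝ) / 2) *
              T ^ (-(1 : ℝ) / 2))| ≤
        C * (n : ℝ) ^ ((5 : ℝ) / 2) * T ^ (-(3 : ℝ) / 2) :=
  ⟨1, one_pos, atkinson_key⟩
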